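/- arXiv:1907.03197 — 4 statements merged into one kernel-verified Lean document; each statement's English description precedes it below -/
import Mathlib

section
/- Let P₁,...,P_m ⊂ ℝ^d be point sets, and suppose each C_i ⊆ P_i is an α-approximate core-set for the k-directional height of P_i. Then MAXDET_k(⋃ P_i) ≤ α^{2k} · MAXDET_k(⋃ C_i). -/
abbrev Pt (d : ℕ) := EuclideanSpace ℝ (Fin d)

/-- Determinant of the Gram matrix of `v 0, …, v (k-1)`; equals `VOL(v)²`. -/
noncomputable def gramDet {d k : ℕ} (v : Fin k → Pt d) : ℝ :=
  Matrix.det (Matrix.of fun i j => (inner ℝ (v i) (v j) : ℝ))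

/-- `MAXDET_k(Q)`: the maximum Gram determinant over size-`k` subsets of `Q`. -/
noncomputable def maxdet {d : ℕ} (k : ℕ) (Q : Set (Pt d)) : ℝ :=
  sSup {x | ∃ S : Fin k → Pt d, Function.Injective S ∧ Set.range S ⊆ Q ∧ x = gramDet S}

/-- The `k`-directional height of `P` with respect to `H`:
the largest distance of a point of `P` from `H`. -/
noncomputable def dirHeight {d : ℕ} (P : Set (Pt d)) (H : Submodule ℝ (Pt d)) : ℝ :=
  ⨆ p ∈ P, Metric.infDist p (H : Set (Pt d))

/-!
Base times height: the Gram determinant of `v₀, …, v_n` is `dist(v_j, H)² · G`, where `H` is the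
span of the other vectors and `G` their Gram determinant. If the vectors are independent and
`v_j ∈ P_i`, then `H` has dimension `k - 1`, so the core-set property gives `c ∈ C_i` at least
`1 / α` times as far from `H` as `v_j`; replacing `v_j` by `c` loses at most a factor `α²`.
Exchanging the `k` points one at a time moves the tuple into `⋃ C_i`.
-/

open Function Matrix Metric

section Gram

variable {E : Type*} [NormedAddCommGroup E] [InnerProductSpace ℝ E]

theorem Submodule.norm_sub_starProjection_eq_infDist (K : Submodule ℝ E)
    [K.HasOrthogonalProjection] (x : E) : ‖x - K.starProjection x‖ = infDist x K := by
  rw [Submodule.starProjection_minimal, infDist_eq_iInf]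
  simp [dist_eq_norm]

namespace Matrix

theorem det_gram_update_sum {ι : Type*} [Fintype ι] [DecidableEq ι] (w : ι → E) (j : ι)
    (c : ι → ℝ) : (gram ℝ (update w j (∑ k, c k • w k))).det = c j ^ 2 * (gram ℝ w).det := by
  set u := update w j (∑ k, c k • w k)
  set M : Matrix ι ι ℝ := of fun a b => inner ℝ (u a) (w b)
  have hcol : gram ℝ u = M.updateCol j fun a => ∑ k, c k • M a k := by
    ext a b
    rcases eq_or_ne b j with rfl | hb
    · simp [M, u, gram_apply, inner_sum, inner_smul_right]
    · simp [M, u, gram_apply, hb]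
  have hrow : M = (gram ℝ w).updateRow j (∑ k, c k • (gram ℝ w) k) := by
    ext a b
    rcases eq_or_ne a j with rfl | ha
    · simp [M, u, gram_apply, sum_inner, inner_smul_left]
    · simp [M, u, gram_apply, ha]
  rw [hcol, det_updateCol_sum, hrow, det_updateRow_sum, smul_eq_mul, smul_eq_mul]
  ring

variable {n : ℕ}

theorem det_gram_update_of_mem_orthogonal (v : Fin (n + 1) → E) (j : Fin (n + 1)) {h : E}
    (hh : h ∈ (Submodule.span ℝ (Set.range (v ∘ j.succAbove)))ᗮ) :
    (gram ℝ (update v j h)).det = ‖h‖ ^ 2 * (gram ℝ (v ∘ j.succAbove)).det := by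
  have hperp (i : Fin n) : inner ℝ h (v (j.succAbove i)) = 0 :=
    Submodule.inner_left_of_mem_orthogonal (Submodule.subset_span (Set.mem_range_self i)) hh
  have hminor : (gram ℝ (update v j h)).submatrix j.succAbove j.succAbove
      = gram ℝ (v ∘ j.succAbove) := by
    ext a b
    simp [gram_apply]
  rw [det_succ_row _ j, Finset.sum_eq_single j]
  · simp [hminor, gram_apply, ← two_mul]
  · intro b _ hb
    obtain ⟨i, rfl⟩ := Fin.exists_succAbove_eq hb
    simp [gram_apply, hperp]
  · simp

theorem det_gram_eq_infDist_sq_mul (v : Fin (n + 1) → E) (j : Fin (n + 1)) :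
    (gram ℝ v).det = infDist (v j) (Submodule.span ℝ (Set.range (v ∘ j.succAbove))) ^ 2
      * (gram ℝ (v ∘ j.succAbove)).det := by
  set H := Submodule.span ℝ (Set.range (v ∘ j.succAbove))
  have : FiniteDimensional ℝ H := FiniteDimensional.span_of_finite ℝ (Set.finite_range _)
  obtain ⟨c, hc⟩ := Submodule.mem_span_range_iff_exists_fun ℝ |>.mp
    (H.starProjection_apply_mem (v j))
  set h := v j - H.starProjection (v j)
  have hv : v = update (update v j h) j
      (∑ k, (Fin.insertNth j 1 c : Fin (n + 1) → ℝ) k • update v j h k) := by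
    rw [Fin.sum_univ_succAbove _ j]
    simp [h, ← hc]
  nth_rw 1 [hv]
  rw [det_gram_update_sum, Fin.insertNth_apply_same, one_pow, one_mul,
    det_gram_update_of_mem_orthogonal _ _ (H.sub_starProjection_mem_orthogonal (v j)),
    Submodule.norm_sub_starProjection_eq_infDist]

theorem det_gram_le_sq_mul_det_gram_update (v : Fin (n + 1) → E) (j : Fin (n + 1)) {c : E}
    {α : ℝ} (h : infDist (v j) (Submodule.span ℝ (Set.range (v ∘ j.succAbove)))
      ≤ α * infDist c (Submodule.span ℝ (Set.range (v ∘ j.succAbove)))) :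
    (gram ℝ v).det ≤ α ^ 2 * (gram ℝ (update v j c)).det := by
  have hsq := pow_le_pow_left₀ infDist_nonneg h 2
  rw [det_gram_eq_infDist_sq_mul v j, det_gram_eq_infDist_sq_mul (update v j c) j,
    update_comp_eq_of_forall_ne v c j.succAbove_ne,
    update_self, ← mul_assoc, ← mul_pow]
  exact mul_le_mul_of_nonneg_right hsq (posSemidef_gram ℝ _).det_nonneg

end Matrix

end Gram

variable {d : ℕ}

-- `gramDet v` unfolds to `(gram ℝ v).det`, so the `Matrix.gram` API applies to it directly.

section MaxDet

variable {k : ℕ} {Q : Set (Pt d)}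

theorem maxdet_nonneg : 0 ≤ maxdet k Q :=
  Real.sSup_nonneg <| by
    rintro _ ⟨S, -, -, rfl⟩
    exact (posSemidef_gram ℝ S).det_nonneg

theorem maxdet_le {B : ℝ} (hB : 0 ≤ B)
    (h : ∀ S : Fin k → Pt d, Injective S → Set.range S ⊆ Q → gramDet S ≤ B) : maxdet k Q ≤ B :=
  Real.sSup_le (by rintro _ ⟨S, hS, hSQ, rfl⟩; exact h S hS hSQ) hB

theorem gramDet_le_maxdet (hQ : Q.Finite) {S : Fin k → Pt d} (hS : Set.range S ⊆ Q) :
    gramDet S ≤ maxdet k Q := by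
  by_cases h0 : gramDet S = 0
  · exact h0 ▸ maxdet_nonneg
  have hbdd : BddAbove {x | ∃ S : Fin k → Pt d, Injective S ∧ Set.range S ⊆ Q ∧
      x = gramDet S} := by
    refine (((Set.Finite.pi fun _ : Fin k => hQ).image gramDet).subset ?_).bddAbove
    rintro _ ⟨S, -, hSQ, rfl⟩
    exact ⟨S, fun i _ => hSQ (Set.mem_range_self i), rfl⟩
  exact le_csSup hbdd ⟨S, (linearIndependent_of_det_gram_ne_zero h0).injective, hS, rfl⟩

end MaxDet

section DirHeight

variable {P : Set (Pt d)} {H : Submodule ℝ (Pt d)}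

theorem le_dirHeight (hP : P.Finite) {x : Pt d} (hx : x ∈ P) :
    infDist x H ≤ dirHeight P H := by
  obtain ⟨B, hB⟩ := (hP.image fun p => infDist p H).bddAbove
  refine le_ciSup_of_le ⟨max B 0, ?_⟩ x (le_ciSup_of_le (by simp) hx le_rfl)
  rintro _ ⟨p, rfl⟩
  exact Real.iSup_le (fun hp => le_max_of_le_left (hB ⟨p, hp, rfl⟩)) (le_max_right _ _)

theorem exists_mem_dirHeight_le (hP : P.Finite) (hpos : 0 < dirHeight P H) :
    ∃ c ∈ P, dirHeight P H ≤ infDist c H := by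
  rcases P.eq_empty_or_nonempty with rfl | hne
  · simp [dirHeight] at hpos
  obtain ⟨c, hc, hmax⟩ := Set.exists_max_image P (fun p => infDist p H) hP hne
  exact ⟨c, hc, Real.iSup_le (fun p => Real.iSup_le (hmax p) infDist_nonneg) infDist_nonneg⟩

end DirHeight

theorem exists_mem_gramDet_le_sq_mul_gramDet_update {n : ℕ} {α : ℝ} (hα : 0 ≤ α)
    {P C : Set (Pt d)} (hP : P.Finite) (hC : C.Finite)
    (hcore : ∀ H : Submodule ℝ (Pt d), Module.finrank ℝ H = n →
      dirHeight P H ≤ α * dirHeight C H)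
    {v : Fin (n + 1) → Pt d} (hv : gramDet v ≠ 0) {j : Fin (n + 1)} (hj : v j ∈ P) :
    ∃ c ∈ C, gramDet v ≤ α ^ 2 * gramDet (update v j c) := by
  set H := Submodule.span ℝ (Set.range (v ∘ j.succAbove))
  have hli : LinearIndependent ℝ v := linearIndependent_of_det_gram_ne_zero hv
  have hrank : Module.finrank ℝ H = n := by
    rw [finrank_span_eq_card (hli.comp _ j.succAbove_right_injective), Fintype.card_fin]
  have hpos : 0 < infDist (v j) H := infDist_nonneg.lt_of_ne' fun h0 =>
    hv (by rw [gramDet, ← gram, det_gram_eq_infDist_sq_mul v j, h0]; ring)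
  have hle : infDist (v j) H ≤ α * dirHeight C H := (le_dirHeight hP hj).trans (hcore H hrank)
  obtain ⟨c, hc, hcH⟩ := exists_mem_dirHeight_le hC (pos_of_mul_pos_right (hpos.trans_le hle) hα)
  exact ⟨c, hc, det_gram_le_sq_mul_det_gram_update v j
    (hle.trans (mul_le_mul_of_nonneg_left hcH hα))⟩

theorem gramDet_le_pow_mul_maxdet {m k : ℕ} {α : ℝ} (hα : 0 ≤ α) {P C : Fin m → Set (Pt d)}
    (hP : ∀ i, (P i).Finite) (hC : ∀ i, (C i).Finite)
    (hcore : ∀ i, ∀ H : Submodule ℝ (Pt d), Module.finrank ℝ H = k - 1 →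
      dirHeight (P i) H ≤ α * dirHeight (C i) H)
    (T : Finset (Fin k)) {S : Fin k → Pt d} (hT : ∀ i ∈ T, S i ∈ ⋃ l, P l)
    (hTc : ∀ i ∉ T, S i ∈ ⋃ l, C l) :
    gramDet S ≤ α ^ (2 * T.card) * maxdet k (⋃ l, C l) := by
  induction T using Finset.induction_on generalizing S with
  | empty =>
    simpa using gramDet_le_maxdet (Set.finite_iUnion hC)
      (Set.range_subset_iff.2 fun i => hTc i (Finset.notMem_empty i))
  | insert j T hjT ih =>
    by_cases hS0 : gramDet S = 0
    · exact hS0 ▸ mul_nonneg (pow_nonneg hα _) maxdet_nonneg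
    obtain ⟨n, rfl⟩ : ∃ n, k = n + 1 := Nat.exists_eq_add_one_of_ne_zero j.pos.ne'
    obtain ⟨i₀, hi₀⟩ := Set.mem_iUnion.1 (hT j (Finset.mem_insert_self j T))
    obtain ⟨c, hc, hle⟩ := exists_mem_gramDet_le_sq_mul_gramDet_update hα (hP i₀) (hC i₀)
      (by simpa using hcore i₀) hS0 hi₀
    have hS' : gramDet (update S j c) ≤ α ^ (2 * T.card) * maxdet (n + 1) (⋃ l, C l) := by
      refine ih (fun i hi => ?_) (fun i hi => ?_)
      · rw [update_of_ne (ne_of_mem_of_not_mem hi hjT)]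
        exact hT i (Finset.mem_insert_of_mem hi)
      · rcases eq_or_ne i j with rfl | hij
        · simpa using Set.mem_iUnion.2 ⟨i₀, hc⟩
        · rw [update_of_ne hij]
          exact hTc i (by simp [hij, hi])
    calc gramDet S ≤ α ^ 2 * gramDet (update S j c) := hle
      _ ≤ α ^ 2 * (α ^ (2 * T.card) * maxdet (n + 1) (⋃ l, C l)) := by gcongr
      _ = α ^ (2 * (insert j T).card) * maxdet (n + 1) (⋃ l, C l) := by
        rw [Finset.card_insert_of_notMem hjT]
        ring

theorem dirHeight_coreset_maxdet_general {d m k : ℕ} (α : ℝ) (hα : 1 ≤ α)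
    (P C : Fin m → Set (Pt d))
    (hfin : ∀ i, (P i).Finite) (hsub : ∀ i, C i ⊆ P i)
    (hcore : ∀ i, ∀ H : Submodule ℝ (Pt d), Module.finrank ℝ H = k - 1 →
      dirHeight (P i) H ≤ α * dirHeight (C i) H) :
    maxdet k (⋃ i, P i) ≤ α ^ (2 * k) * maxdet k (⋃ i, C i) := by
  have hα₀ : 0 ≤ α := zero_le_one.trans hα
  refine maxdet_le (mul_nonneg (pow_nonneg hα₀ _) maxdet_nonneg) fun S _ hS => ?_
  simpa using gramDet_le_pow_mul_maxdet hα₀ hfin (fun i => (hfin i).subset (hsub i)) hcore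
    Finset.univ (fun i _ => hS (Set.mem_range_self i)) (by simp)

/-- If each `C i ⊆ P i` is an `α`-approximate core-set for the `k`-directional height
of `P i`, then `MAXDET_k(⋃ P i) ≤ α^{2k} · MAXDET_k(⋃ C i)`. -/
theorem dirHeight_coreset_maxdet {d m k : ℕ} (hk : 1 ≤ k) (α : ℝ) (hα : 1 ≤ α)
    (P C : Fin m → Set (Pt d))
    (hfin : ∀ i, (P i).Finite) (hsub : ∀ i, C i ⊆ P i)
    (hcore : ∀ i, ∀ H : Submodule ℝ (Pt d), Module.finrank ℝ H = k - 1 →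
      dirHeight (P i) H ≤ α * dirHeight (C i) H) :
    maxdet k (⋃ i, P i) ≤ α ^ (2 * k) * maxdet k (⋃ i, C i) :=
  dirHeight_coreset_maxdet_general α hα P C hfin hsub hcore
end

section
/- Suppose q₁,...,q_k are the points selected (in order) by the greedy farthest-point algorithm on a point set P. Then for any p ∈ P and any 1 ≤ t ≤ k, the projection p^t of p onto G_t = span{q₁,...,q_t} can be written as p^t = Σ_{i=1}^t α_i q_i with |α_i| ≤ 2^{t−1} for all i. -/
/-- `q` is a run of the greedy farthest-point algorithm on `P`: each `q i` belongs to
`P` and is a farthest point of `P` from the span of the previously chosen points. -/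
def IsGreedy {d k : ℕ} (P : Set (Pt d)) (q : Fin k → Pt d) : Prop :=
  ∀ i : Fin k, q i ∈ P ∧ ∀ p ∈ P,
    Metric.infDist p (Submodule.span ℝ (q '' {j | j < i}) : Set (Pt d)) ≤
      Metric.infDist (q i) (Submodule.span ℝ (q '' {j | j < i}) : Set (Pt d))

open scoped RealInnerProductSpace

namespace Submodule

section RCLike

variable {𝕜 E : Type*} [RCLike 𝕜] [NormedAddCommGroup E] [InnerProductSpace 𝕜 E]

theorem IsOrtho.starProjection_eq_add {K L M : Submodule 𝕜 E} [K.HasOrthogonalProjection]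
    [L.HasOrthogonalProjection] [M.HasOrthogonalProjection] (hKL : K ⟂ L) (hM : M = K ⊔ L)
    (x : E) : M.starProjection x = K.starProjection x + L.starProjection x := by
  subst hM
  refine eq_starProjection_of_mem_of_inner_eq_zero
    (add_mem (mem_sup_left (starProjection_apply_mem K x))
      (mem_sup_right (starProjection_apply_mem L x))) fun w hw => ?_
  obtain ⟨a, ha, b, hb, rfl⟩ := mem_sup.1 hw
  have hxa := inner_eq_zero_symm.1 (sub_starProjection_mem_orthogonal x a ha)
  have hxb := inner_eq_zero_symm.1 (sub_starProjection_mem_orthogonal x b hb)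
  have hLa := hKL.symm.inner_eq (starProjection_apply_mem L x) ha
  have hKb := hKL.inner_eq (starProjection_apply_mem K x) hb
  simp only [inner_sub_left, inner_add_left, inner_add_right] at hxa hxb ⊢
  linear_combination hxa + hxb - hLa - hKb

theorem span_singleton_sup_eq_span_singleton_sub_sup (K : Submodule 𝕜 E) {v k : E}
    (hk : k ∈ K) : 𝕜 ∙ v ⊔ K = 𝕜 ∙ (v - k) ⊔ K := by
  have key : ∀ u l : E, l ∈ K → 𝕜 ∙ u ⊔ K ≤ 𝕜 ∙ (u - l) ⊔ K := fun u l hl =>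
    sup_le (span_singleton_le_iff_mem _ _ |>.2 (by
      simpa using add_mem (mem_sup_left (mem_span_singleton_self (u - l))) (mem_sup_right hl)))
      le_sup_right
  refine le_antisymm (key v k hk) ?_
  simpa using key (v - k) (-k) (neg_mem hk)

end RCLike

variable {E : Type*} [NormedAddCommGroup E] [InnerProductSpace ℝ E]

theorem infDist_eq_norm_sub_starProjection (K : Submodule ℝ E) [K.HasOrthogonalProjection]
    (x : E) : Metric.infDist x K = ‖x - K.starProjection x‖ := by
  rw [Metric.infDist_eq_iInf, starProjection_minimal]
  simp_rw [dist_eq_norm]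
  rfl

theorem starProjection_span_singleton_sup (K : Submodule ℝ E) [K.HasOrthogonalProjection]
    (v x : E) [(ℝ ∙ v ⊔ K).HasOrthogonalProjection] :
    (ℝ ∙ v ⊔ K).starProjection x = K.starProjection x +
      (⟪v - K.starProjection v, x - K.starProjection x⟫ / ‖v - K.starProjection v‖ ^ 2) •
        (v - K.starProjection v) := by
  set r := v - K.starProjection v
  have hr : r ∈ Kᗮ := sub_starProjection_mem_orthogonal v
  have hortho : ℝ ∙ r ⟂ K := isOrtho_iff_le.2 ((span_singleton_le_iff_mem _ _).2 hr)
  have hinner : ⟪r, K.starProjection x⟫ = 0 :=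
    inner_eq_zero_symm.1 (hr _ (starProjection_apply_mem K x))
  rw [hortho.starProjection_eq_add
    (span_singleton_sup_eq_span_singleton_sub_sup K (starProjection_apply_mem K v)),
    add_comm, starProjection_singleton, inner_sub_right, hinner, sub_zero]
  rfl

end Submodule

theorem abs_real_inner_div_norm_sq_le_one {E : Type*} [NormedAddCommGroup E]
    [InnerProductSpace ℝ E] {r y : E} (h : ‖y‖ ≤ ‖r‖) : |⟪r, y⟫ / ‖r‖ ^ 2| ≤ 1 := by
  rw [abs_div, abs_of_nonneg (sq_nonneg ‖r‖)]
  calc |⟪r, y⟫| / ‖r‖ ^ 2 ≤ (‖r‖ * ‖r‖) / ‖r‖ ^ 2 := by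
        gcongr; exact (abs_real_inner_le_norm r y).trans (by gcongr)
    _ ≤ 1 := div_le_one_of_le₀ (by rw [sq]) (sq_nonneg _)

section BoundedCoeffs

variable {M : Type*} [AddCommGroup M] [Module ℝ M] {k : ℕ}

def HasBoundedCoeffs (q : Fin k → M) (t : ℕ) (B : ℝ) (x : M) : Prop :=
  ∃ α : Fin k → ℝ,
    x = ∑ i, α i • q i ∧ (∀ i : Fin k, t ≤ (i : ℕ) → α i = 0) ∧ ∀ i, |α i| ≤ B

theorem hasBoundedCoeffs_zero (q : Fin k → M) (t : ℕ) {B : ℝ} (hB : 0 ≤ B) :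
    HasBoundedCoeffs q t B 0 :=
  ⟨0, by simp, fun _ _ => rfl, fun _ => by simpa using hB⟩

theorem HasBoundedCoeffs.mono {q : Fin k → M} {t : ℕ} {B B' : ℝ} {x : M}
    (hx : HasBoundedCoeffs q t B x) (hB : B ≤ B') : HasBoundedCoeffs q t B' x :=
  let ⟨α, hsum, hzero, hbound⟩ := hx
  ⟨α, hsum, hzero, fun i => (hbound i).trans hB⟩

theorem HasBoundedCoeffs.add_smul_sub {q : Fin k → M} {t : ℕ} {B c : ℝ} {x y : M}
    (hx : HasBoundedCoeffs q t B x) (hy : HasBoundedCoeffs q t B y) (ht : t < k)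
    (hc : |c| ≤ 1) (hB : 1 ≤ 2 * B) :
    HasBoundedCoeffs q (t + 1) (2 * B) (x + c • (q ⟨t, ht⟩ - y)) := by
  obtain ⟨α, rfl, hα0, hαB⟩ := hx
  obtain ⟨β, rfl, hβ0, hβB⟩ := hy
  set j : Fin k := ⟨t, ht⟩
  refine ⟨α - c • β + Pi.single j c, ?_, fun i hi => ?_, fun i => ?_⟩
  · simp only [Pi.add_apply, Pi.sub_apply, Pi.smul_apply, smul_eq_mul, Pi.single_apply,
      add_smul, sub_smul, mul_smul, ite_smul, zero_smul, Finset.sum_add_distrib,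
      Finset.sum_sub_distrib, Finset.sum_ite_eq', Finset.mem_univ, if_true]
    rw [smul_sub, Finset.smul_sum]
    abel
  · have hij : i ≠ j := fun h => by subst h; simp [j] at hi
    simp [hα0 i (by omega), hβ0 i (by omega), hij]
  · by_cases hij : i = j
    · subst hij
      simpa [hα0 j le_rfl, hβ0 j le_rfl] using hc.trans hB
    · calc |(α - c • β + Pi.single j c : Fin k → ℝ) i| = |α i - c * β i| := by simp [hij]
        _ ≤ |α i| + |c| * |β i| := by rw [← abs_mul]; exact abs_sub _ _
        _ ≤ B + 1 * B := by gcongr; exacts [hαB i, hβB i]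
        _ = 2 * B := by ring

end BoundedCoeffs

theorem span_image_lt_succ {R M : Type*} [Semiring R] [AddCommMonoid M] [Module R M] {k t : ℕ}
    (q : Fin k → M) (ht : t < k) :
    Submodule.span R (q '' {i | (i : ℕ) < t + 1}) =
      R ∙ q ⟨t, ht⟩ ⊔ Submodule.span R (q '' {i | (i : ℕ) < t}) := by
  have hset : {i : Fin k | (i : ℕ) < t + 1} = insert ⟨t, ht⟩ {i : Fin k | (i : ℕ) < t} := by
    ext i
    simp only [Set.mem_ofPred_eq, Set.mem_insert_iff, Fin.ext_iff]
    omega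
  rw [hset, Set.image_insert_eq, Submodule.span_insert]

namespace IsGreedy

variable {d k : ℕ} {P : Set (Pt d)} {q : Fin k → Pt d}

theorem exists_starProjection_succ (hg : IsGreedy P q) {t : ℕ} (ht : t < k) {p : Pt d}
    (hp : p ∈ P) :
    ∃ c : ℝ, |c| ≤ 1 ∧
      (Submodule.span ℝ (q '' {i | (i : ℕ) < t + 1})).starProjection p =
        (Submodule.span ℝ (q '' {i | (i : ℕ) < t})).starProjection p +
          c • (q ⟨t, ht⟩ -
            (Submodule.span ℝ (q '' {i | (i : ℕ) < t})).starProjection (q ⟨t, ht⟩)) := by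
  set K := Submodule.span ℝ (q '' {i | (i : ℕ) < t})
  have hfar : ‖p - K.starProjection p‖ ≤ ‖q ⟨t, ht⟩ - K.starProjection (q ⟨t, ht⟩)‖ := by
    rw [← K.infDist_eq_norm_sub_starProjection, ← K.infDist_eq_norm_sub_starProjection]
    exact (hg ⟨t, ht⟩).2 p hp
  rw [span_image_lt_succ q ht, Submodule.starProjection_span_singleton_sup]
  exact ⟨_, abs_real_inner_div_norm_sq_le_one hfar, rfl⟩

/-- The bound `2 ^ t / 2` equals `2 ^ (t - 1)` for `t ≥ 1` but doubles cleanly also at `t = 0`,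
where `t - 1` truncates. -/
theorem hasBoundedCoeffs_starProjection (hg : IsGreedy P q) {t : ℕ} (ht : t ≤ k) {p : Pt d}
    (hp : p ∈ P) :
    HasBoundedCoeffs q t (2 ^ t / 2)
      ((Submodule.span ℝ (q '' {i | (i : ℕ) < t})).starProjection p) := by
  induction t generalizing p with
  | zero => simpa using hasBoundedCoeffs_zero q 0 (by norm_num : (0 : ℝ) ≤ 2 ^ 0 / 2)
  | succ t ih =>
    replace ht : t < k := ht
    obtain ⟨c, hc, hstep⟩ := hg.exists_starProjection_succ ht hp
    rw [hstep]
    refine ((ih ht.le hp).add_smul_sub (ih ht.le (hg _).1) ht hc ?_).mono (le_of_eq ?_)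
    · rw [mul_div_cancel₀ _ two_ne_zero]
      exact one_le_pow₀ one_le_two
    · ring

end IsGreedy

theorem greedy_projection_coeffs_general {d k : ℕ} (P : Set (Pt d)) (q : Fin k → Pt d)
    (hg : IsGreedy P q)
    (p : Pt d) (hp : p ∈ P) (t : ℕ) (ht2 : t ≤ k) :
    ∃ α : Fin k → ℝ,
      ((Submodule.orthogonalProjection (Submodule.span ℝ (q '' {i | (i : ℕ) < t})) p : Pt d)
        = ∑ i, α i • q i) ∧
      (∀ i : Fin k, t ≤ (i : ℕ) → α i = 0) ∧
      (∀ i, |α i| ≤ 2 ^ (t - 1)) :=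
  (hg.hasBoundedCoeffs_starProjection ht2 hp).mono <| by
    rcases t with _ | t <;> norm_num [pow_succ]

/-- If `q 0, …, q (k-1)` is a greedy selection from `P`, then for any `p ∈ P` and
`1 ≤ t ≤ k`, the projection of `p` onto `G_t = span{q 0, …, q (t-1)}` can be written
as `∑_{i < t} α i • q i` with all `|α i| ≤ 2^{t-1}`. -/
theorem greedy_projection_coeffs {d k : ℕ} (P : Set (Pt d)) (q : Fin k → Pt d)
    (hg : IsGreedy P q) (hind : LinearIndependent ℝ q)
    (p : Pt d) (hp : p ∈ P) (t : ℕ) (ht1 : 1 ≤ t) (ht2 : t ≤ k) :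
    ∃ α : Fin k → ℝ,
      ((Submodule.orthogonalProjection (Submodule.span ℝ (q '' {i | (i : ℕ) < t})) p : Pt d)
        = ∑ i, α i • q i) ∧
      (∀ i : Fin k, t ≤ (i : ℕ) → α i = 0) ∧
      (∀ i, |α i| ≤ 2 ^ (t - 1)) :=
  greedy_projection_coeffs_general P q hg p hp t ht2
end

section
/- Let C = c(P) be the output of the greedy farthest-point algorithm on a finite point set P ⊂ ℝ^d with |C| = k. Then C is a (2k·3^k)-approximate core-set for the k-directional height of P: for every (k−1)-dimensional linear subspace H, max_{q∈C} dist(q,H) ≥ (max_{p∈P} dist(p,H)) / (2k·3^k). -/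
/-!
Let `T i` be the span of the first `i` greedy points and `g i` their Gram–Schmidt vectors, so
that `‖g i‖ = dist (q i, T i)` and, by the greedy choice, `|⟪x, g j⟫| ≤ ‖g j‖²` for `x ∈ P`.
Back-substitution in the triangular system relating the `q i` to the `g i` bounds a seminorm at
any `x ∈ T n` whose inner products with the `g j` obey such bounds by `2 ^ n - 1` times the
maximum `h` of the seminorm on the greedy points.

Applied to `dist (·, H)` at the projection of `p` onto `T (k - 1)`, this gives
`dist (p, H) ≤ (2 ^ (k - 1) - 1) h + ‖g (k - 1)‖`. Applied to `|⟪·, w⟫|` at a unit vector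
`w ∈ T k` orthogonal to `H`, which exists when `dim T k = k > dim H`, it shows that the smallest
residual `‖g (k - 1)‖` is at most `(2 ^ k - 1) h`.
-/

open Submodule InnerProductSpace Metric Module
open scoped RealInnerProductSpace

variable {E : Type*} [NormedAddCommGroup E] [InnerProductSpace ℝ E]

theorem Submodule.infDist_eq_norm_sub_starProjection_s10 (K : Submodule ℝ E)
    [K.HasOrthogonalProjection] (x : E) : infDist x K = ‖x - K.starProjection x‖ := by
  simp only [starProjection_minimal, infDist_eq_iInf, dist_eq_norm]
  rfl

theorem Submodule.abs_inner_le_infDist_mul_norm (K : Submodule ℝ E) [K.HasOrthogonalProjection]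
    {v : E} (hv : v ∈ Kᗮ) (x : E) : |⟪x, v⟫| ≤ infDist x K * ‖v‖ := by
  have hx : ⟪x, v⟫ = ⟪x - K.starProjection x, v⟫ := by
    rw [inner_sub_left, inner_right_of_mem_orthogonal (K.starProjection_apply_mem x) hv, sub_zero]
  rw [hx, K.infDist_eq_norm_sub_starProjection_s10]
  exact abs_real_inner_le_norm _ _

theorem Submodule.exists_mem_orthogonal_norm_eq_one {K H : Submodule ℝ E} [FiniteDimensional ℝ K]
    [FiniteDimensional ℝ H] (h : finrank ℝ H < finrank ℝ K) : ∃ w ∈ K, w ∈ Hᗮ ∧ ‖w‖ = 1 := by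
  let π : K →ₗ[ℝ] H := (H.orthogonalProjectionOnto ∘L K.subtypeL).toLinearMap
  obtain ⟨u, hu, hu0⟩ :=
    exists_mem_ne_zero_of_ne_bot (LinearMap.ker_ne_bot_of_finrank_lt (f := π) h)
  have hu0' : (u : E) ≠ 0 := by simpa using hu0
  refine ⟨‖(u : E)‖⁻¹ • (u : E), K.smul_mem _ u.2, Hᗮ.smul_mem _ ?_, norm_smul_inv_norm hu0'⟩
  exact orthogonalProjectionOnto_eq_zero_iff.mp hu

section GramSchmidt

variable {ι : Type*} [LinearOrder ι] [LocallyFiniteOrderBot ι] [WellFoundedLT ι] (f : ι → E)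

instance (i : ι) : FiniteDimensional ℝ (span ℝ (f '' Set.Iio i)) :=
  FiniteDimensional.span_of_finite ℝ ((Set.finite_Iio i).image f)

theorem InnerProductSpace.gramSchmidt_mem_orthogonal_span_Iio (i : ι) :
    gramSchmidt ℝ f i ∈ (span ℝ (f '' Set.Iio i))ᗮ := by
  have h : span ℝ (gramSchmidt ℝ f '' Set.Iio i) ≤ (ℝ ∙ gramSchmidt ℝ f i)ᗮ := by
    rw [span_le]
    rintro _ ⟨j, hj, rfl⟩
    exact mem_orthogonal_singleton_iff_inner_left.mpr (gramSchmidt_orthogonal ℝ f hj.ne)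
  rw [← span_gramSchmidt_Iio]
  exact orthogonal_le h (le_orthogonal_orthogonal _ (mem_span_singleton_self _))

theorem InnerProductSpace.sub_gramSchmidt_mem_span_Iio (i : ι) :
    f i - gramSchmidt ℝ f i ∈ span ℝ (f '' Set.Iio i) := by
  rw [gramSchmidt_def, sub_sub_cancel, ← span_gramSchmidt_Iio ℝ f i]
  refine sum_mem fun j hj => ?_
  rw [starProjection_singleton]
  exact smul_mem _ _ (subset_span ⟨j, Finset.mem_Iio.mp hj, rfl⟩)

theorem InnerProductSpace.gramSchmidt_eq_sub_starProjection (i : ι) :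
    gramSchmidt ℝ f i = f i - (span ℝ (f '' Set.Iio i)).starProjection (f i) := by
  rw [eq_starProjection_of_mem_orthogonal' (sub_gramSchmidt_mem_span_Iio f i)
    (gramSchmidt_mem_orthogonal_span_Iio f i) (sub_add_cancel _ _).symm, sub_sub_cancel]

theorem InnerProductSpace.norm_gramSchmidt_eq_infDist (i : ι) :
    ‖gramSchmidt ℝ f i‖ = infDist (f i) (span ℝ (f '' Set.Iio i)) := by
  rw [infDist_eq_norm_sub_starProjection_s10, gramSchmidt_eq_sub_starProjection]

theorem InnerProductSpace.inner_gramSchmidt_self (i : ι) :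
    ⟪f i, gramSchmidt ℝ f i⟫ = ‖gramSchmidt ℝ f i‖ ^ 2 := by
  rw [← real_inner_self_eq_norm_sq]
  nth_rw 1 [← sub_add_cancel (f i) (gramSchmidt ℝ f i)]
  rw [inner_add_left, inner_right_of_mem_orthogonal (sub_gramSchmidt_mem_span_Iio f i)
    (gramSchmidt_mem_orthogonal_span_Iio f i), zero_add]

end GramSchmidt

section PrefixSpan

variable {k : ℕ} (q : Fin k → E)

noncomputable def prefixSpan (n : ℕ) : Submodule ℝ E :=
  span ℝ (q '' {j | (j : ℕ) < n})

instance (n : ℕ) : FiniteDimensional ℝ (prefixSpan q n) :=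
  FiniteDimensional.span_of_finite ℝ (Set.toFinite _)

theorem prefixSpan_mono : Monotone (prefixSpan q) :=
  fun _ _ hmn => span_mono (Set.image_mono fun _ hj => lt_of_lt_of_le hj hmn)

theorem prefixSpan_zero : prefixSpan q 0 = ⊥ := by
  simp [prefixSpan]

theorem prefixSpan_succ (i : Fin k) : prefixSpan q (i + 1) = ℝ ∙ q i ⊔ prefixSpan q i := by
  have h : {j : Fin k | (j : ℕ) < i + 1} = insert i {j : Fin k | (j : ℕ) < i} := by
    ext j
    simp only [Set.mem_ofPred_eq, Set.mem_insert_iff, Fin.ext_iff]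
    omega
  rw [prefixSpan, h, Set.image_insert_eq, span_insert]
  rfl

theorem prefixSpan_self : prefixSpan q k = span ℝ (Set.range q) := by
  simp [prefixSpan]

theorem gramSchmidt_mem_prefixSpan {i : Fin k} {n : ℕ} (hin : (i : ℕ) < n) :
    gramSchmidt ℝ q i ∈ prefixSpan q n :=
  span_mono (Set.image_mono fun _ hj => lt_of_le_of_lt hj hin) (gramSchmidt_mem_span ℝ q le_rfl)

theorem gramSchmidt_mem_orthogonal_prefixSpan (i : Fin k) :
    gramSchmidt ℝ q i ∈ (prefixSpan q i)ᗮ :=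
  gramSchmidt_mem_orthogonal_span_Iio q i

theorem norm_gramSchmidt_eq_infDist_prefixSpan (i : Fin k) :
    ‖gramSchmidt ℝ q i‖ = infDist (q i) (prefixSpan q i) :=
  norm_gramSchmidt_eq_infDist q i

theorem exists_eq_smul_add_of_mem_prefixSpan_succ (i : Fin k) {x : E} {C : ℝ} (hC : 0 ≤ C)
    (hx : x ∈ prefixSpan q (i + 1)) (hxC : |⟪x, gramSchmidt ℝ q i⟫| ≤ C * ‖gramSchmidt ℝ q i‖ ^ 2) :
    ∃ c : ℝ, ∃ y ∈ prefixSpan q i, |c| ≤ C ∧ x = c • q i + y := by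
  rw [prefixSpan_succ, mem_sup] at hx
  obtain ⟨_, hc, y, hy, rfl⟩ := hx
  obtain ⟨c, rfl⟩ := mem_span_singleton.mp hc
  by_cases h0 : gramSchmidt ℝ q i = 0
  · have hqi : q i ∈ span ℝ (q '' Set.Iio i) := by
      simpa [h0] using sub_gramSchmidt_mem_span_Iio q i
    exact ⟨0, c • q i + y, add_mem (smul_mem _ c hqi) hy, by simpa using hC, by simp⟩
  · have hinner : ⟪c • q i + y, gramSchmidt ℝ q i⟫ = c * ‖gramSchmidt ℝ q i‖ ^ 2 := by
      rw [inner_add_left, real_inner_smul_left, inner_gramSchmidt_self,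
        inner_right_of_mem_orthogonal hy (gramSchmidt_mem_orthogonal_prefixSpan q i), add_zero]
    refine ⟨c, y, hy, ?_, rfl⟩
    rw [hinner, abs_mul, abs_sq] at hxC
    exact le_of_mul_le_mul_right hxC (by positivity)

end PrefixSpan

section BackSubstitution

variable {k : ℕ} {q : Fin k → E}

/-- Each step peels off the coefficient of the last point, which is at most `C`; this at most
doubles the bounds on the remaining inner products, whence `C + 2C + ⋯ = C (2 ^ n - 1)`. -/
theorem seminorm_le_of_mem_prefixSpan (f : Seminorm ℝ E) {h : ℝ} (hfq : ∀ i, f (q i) ≤ h)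
    (hq : ∀ i j, |⟪q i, gramSchmidt ℝ q j⟫| ≤ ‖gramSchmidt ℝ q j‖ ^ 2) {n : ℕ} (hn : n ≤ k)
    {C : ℝ} (hC : 0 ≤ C) {x : E} (hx : x ∈ prefixSpan q n)
    (hxC : ∀ j : Fin k, (j : ℕ) < n → |⟪x, gramSchmidt ℝ q j⟫| ≤ C * ‖gramSchmidt ℝ q j‖ ^ 2) :
    f x ≤ C * (2 ^ n - 1) * h := by
  induction n generalizing C x with
  | zero =>
    rw [prefixSpan_zero, mem_bot] at hx
    simp [hx]
  | succ n ih =>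
    set i : Fin k := ⟨n, hn⟩
    obtain ⟨c, y, hy, hc, rfl⟩ :=
      exists_eq_smul_add_of_mem_prefixSpan_succ q i hC hx (hxC i (Nat.lt_succ_self n))
    have hyC : ∀ j : Fin k, (j : ℕ) < n →
        |⟪y, gramSchmidt ℝ q j⟫| ≤ 2 * C * ‖gramSchmidt ℝ q j‖ ^ 2 := by
      intro j hj
      have hy_eq : ⟪y, gramSchmidt ℝ q j⟫ =
          ⟪c • q i + y, gramSchmidt ℝ q j⟫ - c * ⟪q i, gramSchmidt ℝ q j⟫ := by
        rw [inner_add_left, real_inner_smul_left]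
        ring
      calc |⟪y, gramSchmidt ℝ q j⟫|
          ≤ |⟪c • q i + y, gramSchmidt ℝ q j⟫| + |c| * |⟪q i, gramSchmidt ℝ q j⟫| := by
            rw [hy_eq, ← abs_mul]
            exact abs_sub _ _
        _ ≤ C * ‖gramSchmidt ℝ q j‖ ^ 2 + C * ‖gramSchmidt ℝ q j‖ ^ 2 :=
            add_le_add (hxC j (by omega)) (mul_le_mul hc (hq i j) (abs_nonneg _) hC)
        _ = 2 * C * ‖gramSchmidt ℝ q j‖ ^ 2 := by ring
    have hfy := ih (by omega) (by positivity) hy hyC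
    have hfc : |c| * f (q i) ≤ C * h := mul_le_mul hc (hfq i) (apply_nonneg f _) hC
    calc f (c • q i + y) ≤ |c| * f (q i) + f y := by
          simpa only [map_smul_eq_mul, Real.norm_eq_abs] using map_add_le_add f (c • q i) y
      _ ≤ C * h + 2 * C * (2 ^ n - 1) * h := add_le_add hfc hfy
      _ = C * (2 ^ (n + 1) - 1) * h := by ring

end BackSubstitution

namespace IsGreedy

variable {d k : ℕ} {P : Set (Pt d)} {q : Fin k → Pt d}

theorem infDist_le_norm_gramSchmidt (hg : IsGreedy P q) {x : Pt d} (hx : x ∈ P) (i : Fin k) :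
    infDist x (prefixSpan q i) ≤ ‖gramSchmidt ℝ q i‖ := by
  rw [norm_gramSchmidt_eq_infDist_prefixSpan]
  exact (hg i).2 x hx

theorem abs_inner_gramSchmidt_le (hg : IsGreedy P q) {x : Pt d} (hx : x ∈ P) (i : Fin k) :
    |⟪x, gramSchmidt ℝ q i⟫| ≤ ‖gramSchmidt ℝ q i‖ ^ 2 :=
  calc |⟪x, gramSchmidt ℝ q i⟫|
      ≤ infDist x (prefixSpan q i) * ‖gramSchmidt ℝ q i‖ :=
        abs_inner_le_infDist_mul_norm _ (gramSchmidt_mem_orthogonal_prefixSpan q i) x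
    _ ≤ ‖gramSchmidt ℝ q i‖ ^ 2 := by
        rw [sq]
        exact mul_le_mul_of_nonneg_right (hg.infDist_le_norm_gramSchmidt hx i) (norm_nonneg _)

theorem norm_gramSchmidt_antitone (hg : IsGreedy P q) : Antitone fun i => ‖gramSchmidt ℝ q i‖ := by
  intro i j hij
  calc ‖gramSchmidt ℝ q j‖ = infDist (q j) (prefixSpan q j) :=
        norm_gramSchmidt_eq_infDist_prefixSpan q j
    _ ≤ infDist (q j) (prefixSpan q i) :=
        infDist_le_infDist_of_subset (prefixSpan_mono q (Fin.le_iff_val_le_val.mp hij))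
          ⟨0, zero_mem _⟩
    _ ≤ ‖gramSchmidt ℝ q i‖ := hg.infDist_le_norm_gramSchmidt (hg j).1 i

theorem norm_gramSchmidt_le_of_forall_le (hg : IsGreedy P q) (H : Submodule ℝ (Pt d))
    (hH : finrank ℝ H < k) {h : ℝ} (hqH : ∀ i, infDist (q i) H ≤ h) {i : Fin k}
    (hi : ∀ j, ‖gramSchmidt ℝ q i‖ ≤ ‖gramSchmidt ℝ q j‖) :
    ‖gramSchmidt ℝ q i‖ ≤ (2 ^ k - 1) * h := by
  rcases (norm_nonneg (gramSchmidt ℝ q i)).eq_or_lt with h0 | hpos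
  · rw [← h0]
    have h2k : (1 : ℝ) ≤ 2 ^ k := one_le_pow₀ one_le_two
    exact mul_nonneg (sub_nonneg.mpr h2k) (infDist_nonneg.trans (hqH i))
  have hne : ∀ j, gramSchmidt ℝ q j ≠ 0 := fun j => norm_pos_iff.mp (hpos.trans_le (hi j))
  have hrank : finrank ℝ (prefixSpan q k) = k := by
    rw [prefixSpan_self, ← span_gramSchmidt ℝ q, finrank_span_eq_card
      (linearIndependent_of_ne_zero_of_inner_eq_zero hne fun _ _ => gramSchmidt_orthogonal ℝ q),
      Fintype.card_fin]
  obtain ⟨w, hwq, hwH, hw⟩ := exists_mem_orthogonal_norm_eq_one (hrank ▸ hH)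
  let f : Seminorm ℝ (Pt d) := (normSeminorm ℝ ℝ).comp (innerₗ (Pt d) w)
  have hf : ∀ y, f y = |⟪y, w⟫| := fun y => by simp [f, real_inner_comm]
  have hfq : ∀ j, f (q j) ≤ h := fun j =>
    calc f (q j) ≤ infDist (q j) H * ‖w‖ := (hf _).trans_le (abs_inner_le_infDist_mul_norm H hwH _)
      _ ≤ h := by rw [hw, mul_one]; exact hqH j
  have hwC : ∀ j : Fin k, (j : ℕ) < k →
      |⟪w, gramSchmidt ℝ q j⟫| ≤ ‖gramSchmidt ℝ q i‖⁻¹ * ‖gramSchmidt ℝ q j‖ ^ 2 := fun j _ =>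
    calc |⟪w, gramSchmidt ℝ q j⟫| ≤ ‖w‖ * ‖gramSchmidt ℝ q j‖ := abs_real_inner_le_norm _ _
      _ = ‖gramSchmidt ℝ q i‖⁻¹ * ‖gramSchmidt ℝ q i‖ * ‖gramSchmidt ℝ q j‖ := by
          rw [hw, inv_mul_cancel₀ hpos.ne']
      _ ≤ ‖gramSchmidt ℝ q i‖⁻¹ * ‖gramSchmidt ℝ q j‖ * ‖gramSchmidt ℝ q j‖ := by gcongr; exact hi j
      _ = ‖gramSchmidt ℝ q i‖⁻¹ * ‖gramSchmidt ℝ q j‖ ^ 2 := by ring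
  have hfw := seminorm_le_of_mem_prefixSpan f hfq (fun a => hg.abs_inner_gramSchmidt_le (hg a).1)
    le_rfl (inv_nonneg.mpr hpos.le) hwq hwC
  rw [hf, real_inner_self_eq_norm_sq, hw, one_pow, abs_one, mul_assoc, le_inv_mul_iff₀ hpos,
    mul_one] at hfw
  exact hfw

theorem infDist_le_add_norm_gramSchmidt (hg : IsGreedy P q) (H : Submodule ℝ (Pt d)) {h : ℝ}
    (hqH : ∀ i, infDist (q i) H ≤ h) {p : Pt d} (hp : p ∈ P) (i : Fin k) :
    infDist p H ≤ (2 ^ (i : ℕ) - 1) * h + ‖gramSchmidt ℝ q i‖ := by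
  set x := (prefixSpan q i).starProjection p
  let f : Seminorm ℝ (Pt d) := (normSeminorm ℝ (Pt d)).comp Hᗮ.starProjection.toLinearMap
  have hf : ∀ y, f y = infDist y H := fun y => by
    simp [f, infDist_eq_norm_sub_starProjection_s10]
  have hxC : ∀ j : Fin k, (j : ℕ) < i → |⟪x, gramSchmidt ℝ q j⟫| ≤ 1 * ‖gramSchmidt ℝ q j‖ ^ 2 := by
    intro j hj
    have hpx : ⟪p - x, gramSchmidt ℝ q j⟫ = 0 :=
      starProjection_inner_eq_zero p _ (gramSchmidt_mem_prefixSpan q hj)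
    rw [inner_sub_left, sub_eq_zero] at hpx
    rw [one_mul, ← hpx]
    exact hg.abs_inner_gramSchmidt_le hp j
  have hfx := seminorm_le_of_mem_prefixSpan f (fun j => (hf _).trans_le (hqH j))
    (fun j => hg.abs_inner_gramSchmidt_le (hg j).1) i.isLt.le zero_le_one
    (starProjection_apply_mem _ p) hxC
  calc infDist p H ≤ infDist x H + dist p x := infDist_le_infDist_add_dist
    _ ≤ (2 ^ (i : ℕ) - 1) * h + ‖gramSchmidt ℝ q i‖ := by
        gcongr
        · simpa [hf] using hfx
        · rw [dist_eq_norm, ← infDist_eq_norm_sub_starProjection_s10]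
          exact hg.infDist_le_norm_gramSchmidt hp i

end IsGreedy

theorem greedy_dirHeight_coreset_general {d k : ℕ} (hk : 1 ≤ k) (P : Set (Pt d))
    (q : Fin k → Pt d) (hg : IsGreedy P q)
    (H : Submodule ℝ (Pt d)) (hH : Module.finrank ℝ H = k - 1)
    (p : Pt d) (hp : p ∈ P) :
    Metric.infDist p (H : Set (Pt d)) ≤
      (2 * k * 3 ^ k) * ⨆ i : Fin k, Metric.infDist (q i) (H : Set (Pt d)) := by
  set h := ⨆ i : Fin k, infDist (q i) (H : Set (Pt d))
  have hqH : ∀ i, infDist (q i) H ≤ h := le_ciSup (Set.finite_range _).bddAbove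
  let last : Fin k := ⟨k - 1, by omega⟩
  have hh : 0 ≤ h := infDist_nonneg.trans (hqH last)
  have hlast : ‖gramSchmidt ℝ q last‖ ≤ (2 ^ k - 1) * h :=
    hg.norm_gramSchmidt_le_of_forall_le H (by omega) hqH fun j =>
      hg.norm_gramSchmidt_antitone (Nat.le_sub_one_of_lt j.isLt)
  have hcoef : (2 : ℝ) ^ (k - 1) - 1 + (2 ^ k - 1) ≤ 2 * k * 3 ^ k := by
    have h21 : (2 : ℝ) ^ (k - 1) ≤ 2 ^ k := pow_le_pow_right₀ one_le_two (Nat.sub_le k 1)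
    have h23 : (2 : ℝ) ^ k ≤ 3 ^ k := pow_le_pow_left₀ zero_le_two (by norm_num) k
    have h3k : (3 : ℝ) ^ k ≤ k * 3 ^ k :=
      le_mul_of_one_le_left (by positivity) (by exact_mod_cast hk)
    linarith
  calc infDist p H ≤ (2 ^ (k - 1) - 1) * h + ‖gramSchmidt ℝ q last‖ :=
        hg.infDist_le_add_norm_gramSchmidt H hqH hp last
    _ ≤ (2 ^ (k - 1) - 1 + (2 ^ k - 1)) * h := by rw [add_mul]; gcongr
    _ ≤ 2 * k * 3 ^ k * h := mul_le_mul_of_nonneg_right hcoef hh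

/-- The greedy output is a `(2k·3^k)`-approximate core-set for the `k`-directional
height of `P`: for every `(k-1)`-dimensional subspace `H`,
`max_{q ∈ C} dist(q, H) ≥ (max_{p ∈ P} dist(p, H)) / (2k·3^k)`. -/
theorem greedy_dirHeight_coreset {d k : ℕ} (hk : 1 ≤ k) (P : Set (Pt d))
    (hfin : P.Finite) (q : Fin k → Pt d) (hg : IsGreedy P q)
    (H : Submodule ℝ (Pt d)) (hH : Module.finrank ℝ H = k - 1)
    (p : Pt d) (hp : p ∈ P) :
    Metric.infDist p (H : Set (Pt d)) ≤
      (2 * k * 3 ^ k) * ⨆ i : Fin k, Metric.infDist (q i) (H : Set (Pt d)) :=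
  greedy_dirHeight_coreset_general hk P q hg H hH p hp
end

section
/- Given any k vectors q₁',...,q_k' lying in a (k−1)-dimensional linear subspace H ⊆ ℝ^d, there exists an index j and coefficients α_i with |α_i| ≤ 1 such that q_j' = Σ_{i≠j} α_i q_i'. -/
/-- Given `k` vectors lying in a `(k-1)`-dimensional linear subspace `H`, one of them
can be written as a linear combination of the others with all coefficients of
absolute value at most `1`. -/
theorem exists_bounded_combination {d k : ℕ} (hk : 1 ≤ k)
    (H : Submodule ℝ (Pt d)) (hH : Module.finrank ℝ H = k - 1)
    (q' : Fin k → Pt d) (hmem : ∀ i, q' i ∈ H) :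
    ∃ j : Fin k, ∃ α : Fin k → ℝ, (∀ i, |α i| ≤ 1) ∧
      q' j = ∑ i ∈ Finset.univ.erase j, α i • q' i := by
  -- The vectors are linearly dependent since they lie in a (k-1)-dimensional subspace.
  have hdep : ¬ LinearIndependent ℝ q' := by
    intro hli
    have hli' : LinearIndependent ℝ (fun i : Fin k => (⟨q' i, hmem i⟩ : H)) := by
      apply LinearIndependent.of_comp H.subtype
      exact hli
    have hcard := hli'.fintype_card_le_finrank
    rw [hH] at hcard
    simp only [Fintype.card_fin] at hcard
    omega
  rw [Fintype.not_linearIndependent_iff] at hdep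
  obtain ⟨g, hsum, i₀, hi₀⟩ := hdep
  -- pick j maximizing |g j|
  obtain ⟨j, -, hjmax⟩ := Finset.exists_max_image Finset.univ (fun i => |g i|)
    ⟨i₀, Finset.mem_univ i₀⟩
  have hgj : g j ≠ 0 := by
    intro h
    have := hjmax i₀ (Finset.mem_univ i₀)
    rw [h] at this
    simp at this
    exact hi₀ this
  have hgjabs : (0:ℝ) < |g j| := abs_pos.mpr hgj
  refine ⟨j, fun i => -(g i / g j), fun i => ?_, ?_⟩
  · rw [abs_neg, abs_div]
    exact div_le_one_of_le₀ (hjmax i (Finset.mem_univ i)) (le_of_lt hgjabs)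
  · have hsplit : g j • q' j + ∑ i ∈ Finset.univ.erase j, g i • q' i = 0 :=
      (Finset.add_sum_erase Finset.univ (fun i => g i • q' i) (Finset.mem_univ j)).trans hsum
    have : g j • q' j = -∑ i ∈ Finset.univ.erase j, g i • q' i := by
      linear_combination (norm := module) hsplit
    have h2 : q' j = (g j)⁻¹ • (g j • q' j) := by
      rw [smul_smul, inv_mul_cancel₀ hgj, one_smul]
    rw [h2, this, smul_neg, Finset.smul_sum, ← Finset.sum_neg_distrib]
    apply Finset.sum_congr rfl
    intro i _
    rw [smul_smul, ← neg_smul, mul_comm, ← div_eq_mul_inv]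
end
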